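/- arXiv:1806.00892 — 3 statements merged into one kernel-verified Lean document; each statement's English description precedes it below -/
import Mathlib

section
/- Bijective exchange lemma for matroids (Brualdi): Let M be a matroid on a finite ground set E. For any two bases B1 and B2 of M, there exists a bijection ρ : B1 → B2 such that for every element e ∈ B1, the set (B1 \ {e}) ∪ {ρ(e)} is a base of M. -/
open Set

/-- If `f` is in the closure of `B \ {e}` for every `e` in a finite subset `A` of an
independent set `B`, and `f ∈ M.closure B`, then `f ∈ M.closure (B \ A)`. -/
lemma mem_closure_diff_finset {α : Type*} {M : Matroid α} {B : Set α} (hB : M.Indep B)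
    {f : α} (A : Finset α) (hA : ↑A ⊆ B)
    (hf : ∀ e ∈ A, f ∈ M.closure (B \ {e})) (hfB : f ∈ M.closure B) :
    f ∈ M.closure (B \ ↑A) := by
  classical
  revert hA hf
  induction A using Finset.induction_on with
  | empty => intro _ _; simpa
  | @insert e A he ih =>
    intro hA hf
    have heB : e ∈ B := hA (by simp)
    have hA' : ↑A ⊆ B := Set.Subset.trans (by simp) hA
    have hfA : f ∈ M.closure (B \ ↑A) := ih hA' (fun x hx => hf x (by simp [hx]))
    by_contra hcon
    set X : Set α := B \ ↑(insert e A) with hX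
    have hins : insert e X = B \ ↑A := by
      ext x
      simp only [hX, Finset.coe_insert, Set.mem_insert_iff, Set.mem_diff]
      constructor
      · rintro (rfl | ⟨hxB, hx⟩)
        · exact ⟨heB, by simpa using he⟩
        · exact ⟨hxB, fun h => hx (Or.inr h)⟩
      · rintro ⟨hxB, hxA⟩
        rcases eq_or_ne x e with rfl | hne
        · exact Or.inl rfl
        · exact Or.inr ⟨hxB, by simp [hne, hxA]⟩
    have hfe : f ∈ M.closure (insert e X) \ M.closure X := ⟨hins ▸ hfA, hcon⟩
    have hex := Matroid.closure_exchange hfe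
    -- `e ∈ M.closure (insert f X)`, but `insert f X ⊆ M.closure (B \ {e})`
    have hXsub : X ⊆ B \ {e} := Set.diff_subset_diff_right (by simp)
    have hsub : insert f X ⊆ M.closure (B \ {e}) := by
      refine Set.insert_subset (hf e (by simp)) ?_
      exact hXsub.trans (M.subset_closure _ (Set.diff_subset.trans hB.subset_ground))
    have : e ∈ M.closure (B \ {e}) :=
      Matroid.closure_subset_closure_of_subset_closure hsub hex.1
    exact hB.notMem_closure_sdiff_of_mem heB this

/-- If `f ∈ M.E` is not in the closure of `B \ {e}` for a base `B` and `e ∈ B`,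
then `(B \ {e}) ∪ {f}` is a base. -/
lemma base_insert_of_not_mem_closure {α : Type*} {M : Matroid α} {B : Set α} (hB : M.IsBase B)
    {e f : α} (he : e ∈ B) (hfE : f ∈ M.E) (hf : f ∉ M.closure (B \ {e})) :
    M.IsBase (insert f (B \ {e})) := by
  by_cases hfB : f ∈ B
  · by_cases hfe : f = e
    · subst hfe
      rwa [Set.insert_diff_singleton, Set.insert_eq_self.2 he]
    · exact absurd (M.subset_closure _ (Set.diff_subset.trans hB.subset_ground)
        ⟨hfB, by simpa⟩) hf
  · have hind : M.Indep (insert f (B \ {e})) := by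
      rw [((hB.indep.subset Set.diff_subset)).insert_indep_iff_of_notMem
        (fun h => hfB h.1)]
      exact ⟨hfE, hf⟩
    exact hB.exchange_isBase_of_indep hfB hind

/-- **Bijective exchange lemma for matroids (Brualdi).** For any two bases `B₁` and `B₂`
of a matroid `M` on a finite ground set, there exists a bijection `ρ : B₁ → B₂` such that
for every `e ∈ B₁`, the set `(B₁ \ {e}) ∪ {ρ e}` is a base of `M`. -/
theorem bijective_exchange_lemma {α : Type*} (M : Matroid α) [M.Finite]
    (B₁ B₂ : Set α) (h₁ : M.IsBase B₁) (h₂ : M.IsBase B₂) :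
    ∃ ρ : α → α, Set.BijOn ρ B₁ B₂ ∧
      ∀ e ∈ B₁, M.IsBase (insert (ρ e) (B₁ \ {e})) := by
  classical
  have hfin1 : B₁.Finite := h₁.finite
  have hfin2 : B₂.Finite := h₂.finite
  have h2E : B₂ ⊆ M.E := h₂.subset_ground
  have h1E : B₁ ⊆ M.E := h₁.subset_ground
  -- candidate sets
  set t : ↥B₁ → Finset α :=
    fun e => hfin2.toFinset.filter (fun f => M.IsBase (insert f (B₁ \ {(e : α)}))) with ht
  -- Hall's condition
  have hall : ∀ s : Finset ↥B₁, s.card ≤ (s.biUnion t).card := by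
    intro s
    set A : Finset α := s.image Subtype.val with hA
    have hAcard : A.card = s.card := Finset.card_image_of_injective _ Subtype.coe_injective
    have hAB : ↑A ⊆ B₁ := by
      intro x hx
      rw [hA, Finset.coe_image] at hx
      obtain ⟨y, _, rfl⟩ := hx
      exact y.2
    set N : Finset α := s.biUnion t with hN
    have hNB : ↑N ⊆ B₂ := by
      intro x hx
      rw [hN, Finset.mem_coe] at hx
      obtain ⟨e, _, hx⟩ := Finset.mem_biUnion.1 hx
      exact hfin2.mem_toFinset.1 (Finset.mem_filter.1 hx).1
    -- B₂ ⊆ closure ((B₁ \ A) ∪ N)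
    have hkey : B₂ ⊆ M.closure ((B₁ \ ↑A) ∪ ↑N) := by
      intro f hfB2
      by_cases hfN : f ∈ N
      · exact M.subset_closure _
          (Set.union_subset (Set.diff_subset.trans h1E) ((hNB).trans h2E))
          (Set.mem_union_right _ hfN)
      · have hfcl : ∀ e ∈ A, f ∈ M.closure (B₁ \ {e}) := by
          intro e heA
          by_contra hcl
          have hbase := base_insert_of_not_mem_closure h₁ (hAB heA) (h2E hfB2) hcl
          obtain ⟨y, hys, hy⟩ := Finset.mem_image.1 heA
          exact hfN (Finset.mem_biUnion.2 ⟨y, hys,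
            Finset.mem_filter.2 ⟨hfin2.mem_toFinset.2 hfB2, by rwa [hy]⟩⟩)
        have := mem_closure_diff_finset h₁.indep A hAB hfcl
          (h₁.closure_eq ▸ h2E hfB2)
        exact M.closure_subset_closure Set.subset_union_left this
    -- counting
    have hspan : M.closure ((B₁ \ ↑A) ∪ ↑N) = M.E := by
      have h1 : M.closure B₂ ⊆ M.closure ((B₁ \ ↑A) ∪ ↑N) :=
        Matroid.closure_subset_closure_of_subset_closure hkey
      rw [h₂.closure_eq] at h1
      exact (M.closure_subset_ground _).antisymm h1
    have hsp : M.Spanning ((B₁ \ ↑A) ∪ ↑N) := by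
      rw [Matroid.spanning_iff_closure_eq
        (Set.union_subset (Set.diff_subset.trans h1E) (hNB.trans h2E))]
      exact hspan
    obtain ⟨B', hB', hB'sub⟩ := hsp.exists_isBase_subset
    have hfinU : ((B₁ \ ↑A) ∪ ↑N).Finite := hfin1.diff.union N.finite_toSet
    have hc1 : B'.ncard = B₁.ncard := hB'.ncard_eq_ncard_of_isBase h₁
    have hc2 : B'.ncard ≤ (B₁ \ ↑A).ncard + (↑N : Set α).ncard :=
      le_trans (Set.ncard_le_ncard hB'sub hfinU) (Set.ncard_union_le _ _)
    have hc3 : (B₁ \ ↑A).ncard = B₁.ncard - A.card := by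
      rw [Set.ncard_diff hAB A.finite_toSet, Set.ncard_coe_finset]
    have hc4 : A.card ≤ B₁.ncard := by
      rw [← Set.ncard_coe_finset]; exact Set.ncard_le_ncard hAB hfin1
    have hc5 : (↑N : Set α).ncard = N.card := Set.ncard_coe_finset N
    omega
  obtain ⟨g, hginj, hgmem⟩ := (Finset.all_card_le_biUnion_card_iff_exists_injective t).1 hall
  have hg2 : ∀ x : ↥B₁, g x ∈ B₂ ∧ M.IsBase (insert (g x) (B₁ \ {(x : α)})) := by
    intro x
    have := hgmem x
    rw [ht, Finset.mem_filter, hfin2.mem_toFinset] at this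
    exact this
  set ρ : α → α := fun x => if h : x ∈ B₁ then g ⟨x, h⟩ else x with hρ
  have hmaps : Set.MapsTo ρ B₁ B₂ := fun x hx => by
    simp only [hρ, dif_pos hx]; exact (hg2 ⟨x, hx⟩).1
  have hinj : Set.InjOn ρ B₁ := by
    intro x hx y hy hxy
    simp only [hρ, dif_pos hx, dif_pos hy] at hxy
    exact congrArg Subtype.val (hginj hxy)
  have himg : ρ '' B₁ = B₂ := by
    apply Set.eq_of_subset_of_ncard_le (Set.image_subset_iff.2 hmaps) ?_ hfin2
    rw [Set.ncard_image_of_injOn hinj, h₁.ncard_eq_ncard_of_isBase h₂]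
  refine ⟨ρ, ⟨hmaps, hinj, himg.symm ▸ Set.Subset.rfl⟩, ?_⟩
  intro e he
  simp only [hρ, dif_pos he]
  exact (hg2 ⟨e, he⟩).2
end

section
/- Deterministic core of the conservativeness of I-UCB1 (Theorem 4.1): Let M be a matroid on a finite ground set E whose bases admit exchange bijections (as guaranteed by the bijective exchange lemma). Let w̄ : E → ℝ, let B0 be a base of M, and let v : E → ℝ satisfy v(e) = w̄(e) for every e ∈ B0 and v(e) ≤ w̄(e) for every e ∈ E \ B0. If B is a maximum-weight base of M with respect to v, then there exists a bijection ρ : B → B0 such that w̄(b) ≥ w̄(ρ(b)) for every b ∈ B. -/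
/-- **Deterministic core of the conservativeness of I-UCB1 (Theorem 4.1).**
Let `M` be a matroid on a finite ground set whose bases admit exchange bijections.
Let `w̄ : E → ℝ`, let `B₀` be a base of `M`, and let `v : E → ℝ` satisfy `v e = w̄ e`
for every `e ∈ B₀` and `v e ≤ w̄ e` for every `e ∈ E \ B₀`. If `B` is a maximum-weight
base of `M` with respect to `v`, then there exists a bijection `ρ : B → B₀` such that
`w̄ b ≥ w̄ (ρ b)` for every `b ∈ B`. -/
theorem iucb1_conservative_core {α : Type*} [DecidableEq α]
    (M : Matroid α) [M.Finite]
    (hexch : ∀ B₁ B₂ : Set α, M.IsBase B₁ → M.IsBase B₂ →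
      ∃ ρ : α → α, Set.BijOn ρ B₁ B₂ ∧ ∀ e ∈ B₁, M.IsBase (insert (ρ e) (B₁ \ {e})))
    (wbar v : α → ℝ) (B₀ B : Finset α)
    (hB₀ : M.IsBase (↑B₀ : Set α)) (hB : M.IsBase (↑B : Set α))
    (hv_eq : ∀ e ∈ B₀, v e = wbar e)
    (hv_le : ∀ e ∈ M.E, e ∉ B₀ → v e ≤ wbar e)
    (hmax : ∀ B' : Finset α, M.IsBase (↑B' : Set α) → ∑ e ∈ B', v e ≤ ∑ e ∈ B, v e) :
    ∃ ρ : α → α, Set.BijOn ρ (↑B : Set α) (↑B₀ : Set α) ∧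
      ∀ b ∈ B, wbar (ρ b) ≤ wbar b := by
  obtain ⟨ρ, hbij, hbase⟩ := hexch (↑B) (↑B₀) hB hB₀
  refine ⟨ρ, hbij, ?_⟩
  intro b hb
  have hbE : b ∈ M.E := hB.subset_ground (by exact_mod_cast hb)
  have hρb : ρ b ∈ B₀ := by exact_mod_cast hbij.mapsTo (by exact_mod_cast hb)
  have hvρ : v (ρ b) = wbar (ρ b) := hv_eq _ hρb
  have hvb : v b ≤ wbar b := by
    by_cases h : b ∈ B₀
    · exact (hv_eq b h).le
    · exact hv_le b hbE h
  have hvle : v (ρ b) ≤ v b := by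
    by_cases heq : ρ b = b
    · rw [heq]
    · have hbase' := hbase b (by exact_mod_cast hb)
      set B' : Finset α := insert (ρ b) (B.erase b) with hB'
      have hcoe : (↑B' : Set α) = insert (ρ b) ((↑B : Set α) \ {b}) := by
        simp [hB', Finset.coe_insert, Finset.coe_erase]
      have hbase'' : M.IsBase (↑B' : Set α) := by rw [hcoe]; exact hbase'
      have hnotmem : ρ b ∉ B.erase b := by
        intro hmem
        have hsub : (↑B' : Set α) ⊆ (↑B : Set α) := by
          intro x hx
          simp only [hB', Finset.coe_insert, Set.mem_insert_iff, Finset.coe_erase,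
            Set.mem_diff] at hx
          rcases hx with h1 | h1
          · subst h1; exact_mod_cast Finset.mem_of_mem_erase hmem
          · exact h1.1
        have heqs := hbase''.eq_of_subset_isBase hB hsub
        have : B' = B := Finset.coe_injective heqs
        have hbB' : b ∈ B' := this ▸ hb
        simp [hB', heq, Ne.symm heq] at hbB'
      have hsum := hmax B' hbase''
      rw [hB', Finset.sum_insert hnotmem, Finset.sum_erase_eq_sub hb] at hsum
      linarith
  linarith
end

section
/- Deterministic core of the conservativeness of I-UCB2 (Theorem 4.3): Let M be a matroid on a finite ground set E whose bases admit exchange bijections (as guaranteed by the bijective exchange lemma). Let w̄ : E → ℝ, let B0 be a base of M, and let v : E → ℝ satisfy v(e) ≥ w̄(e) for every e ∈ B0 and v(e) ≤ w̄(e) for every e ∈ E \ B0. If B is a maximum-weight base of M with respect to v, then there exists a bijection ρ : B → B0 such that w̄(b) ≥ w̄(ρ(b)) for every b ∈ B. -/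
/-- **Deterministic core of the conservativeness of I-UCB2 (Theorem 4.3).**
Let `M` be a matroid on a finite ground set whose bases admit exchange bijections.
Let `w̄ : E → ℝ`, let `B₀` be a base of `M`, and let `v : E → ℝ` satisfy `v e ≥ w̄ e`
for every `e ∈ B₀` and `v e ≤ w̄ e` for every `e ∈ E \ B₀`. If `B` is a maximum-weight
base of `M` with respect to `v`, then there exists a bijection `ρ : B → B₀` such that
`w̄ b ≥ w̄ (ρ b)` for every `b ∈ B`. -/
theorem iucb2_conservative_core {α : Type*} [DecidableEq α]
    (M : Matroid α) [M.Finite]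
    (hexch : ∀ B₁ B₂ : Set α, M.IsBase B₁ → M.IsBase B₂ →
      ∃ ρ : α → α, Set.BijOn ρ B₁ B₂ ∧ ∀ e ∈ B₁, M.IsBase (insert (ρ e) (B₁ \ {e})))
    (wbar v : α → ℝ) (B₀ B : Finset α)
    (hB₀ : M.IsBase (↑B₀ : Set α)) (hB : M.IsBase (↑B : Set α))
    (hv_ge : ∀ e ∈ B₀, wbar e ≤ v e)
    (hv_le : ∀ e ∈ M.E, e ∉ B₀ → v e ≤ wbar e)
    (hmax : ∀ B' : Finset α, M.IsBase (↑B' : Set α) → ∑ e ∈ B', v e ≤ ∑ e ∈ B, v e) :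
    ∃ ρ : α → α, Set.BijOn ρ (↑B : Set α) (↑B₀ : Set α) ∧
      ∀ b ∈ B, wbar (ρ b) ≤ wbar b := by
  obtain ⟨ρ, hρ, hbase⟩ := hexch (↑B) (↑B₀) hB hB₀
  -- key: if b ∈ B and ρ b ≠ b then ρ b ∉ B
  have key : ∀ b ∈ B, ρ b ≠ b → ρ b ∉ B := by
    intro b hb hne hmem
    have h1 : M.IsBase (insert (ρ b) ((↑B : Set α) \ {b})) := hbase b hb
    have heq : insert (ρ b) ((↑B : Set α) \ {b}) = (↑B : Set α) \ {b} := by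
      apply Set.insert_eq_self.mpr
      exact ⟨hmem, hne⟩
    rw [heq] at h1
    have h2 := h1.eq_of_subset_isBase hB Set.diff_subset
    have h3 : b ∈ ((↑B : Set α) \ {b}) := by rw [h2]; exact_mod_cast hb
    exact h3.2 rfl
  refine ⟨ρ, hρ, ?_⟩
  intro b hb
  by_cases hfix : ρ b = b
  · rw [hfix]
  -- ρ b ∉ B
  have hnotB : ρ b ∉ B := key b hb hfix
  have hρb₀ : ρ b ∈ B₀ := by exact_mod_cast hρ.1 (by exact_mod_cast hb)
  -- b ∉ B₀ : if b ∈ B₀, then by surjectivity some e ∈ B with ρ e = b; e ≠ b forces contradiction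
  have hbnot : b ∉ B₀ := by
    intro hbB₀
    obtain ⟨e, he, hρe⟩ := hρ.2.2 (show b ∈ (↑B₀ : Set α) from by exact_mod_cast hbB₀)
    have heB : e ∈ B := by exact_mod_cast he
    by_cases hee : ρ e = e
    · have heb : e = b := hee.symm.trans hρe
      rw [heb] at hρe; exact hfix hρe
    · exact key e heB hee (by rw [hρe]; exact_mod_cast hb)
  -- swap gives v (ρ b) ≤ v b
  have hswap : M.IsBase (↑(insert (ρ b) (B.erase b)) : Set α) := by
    have : (↑(insert (ρ b) (B.erase b)) : Set α) = insert (ρ b) ((↑B : Set α) \ {b}) := by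
      push_cast [Finset.coe_erase]; rfl
    rw [this]; exact hbase b hb
  have hsum := hmax _ hswap
  rw [Finset.sum_insert (by simp [hnotB]), Finset.sum_erase_eq_sub hb] at hsum
  have hvle : v (ρ b) ≤ v b := by linarith
  have hbE : b ∈ M.E := hB.subset_ground (by exact_mod_cast hb)
  calc wbar (ρ b) ≤ v (ρ b) := hv_ge _ hρb₀
    _ ≤ v b := hvle
    _ ≤ wbar b := hv_le b hbE hbnot
end
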